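/- Let Ā be a minimal graph, i.e. a finite connected graph that is a minimal covering quotient of its own universal covering tree. Then every automorphism of Ā is an edge automorphism: its vertex map is the identity on the vertex set of Ā. -/

import Mathlib

/-- A rooted directed multigraph. -/
structure RDGraph where
  V : Type
  E : Type
  s : E → V
  t : E → V
  root : V

namespace RDGraph

/-- `l` is a path: consecutive edges are composable. -/
def IsPath (A : RDGraph) (l : List A.E) : Prop :=
  l.Chain' (fun e f => A.t e = A.s f)

/-- `l` is a path starting at the vertex `q`. -/
def PathFrom (A : RDGraph) (q : A.V) (l : List A.E) : Prop :=
  A.IsPath l ∧ ∀ e ∈ l.head?, A.s e = q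

/-- The target of the path `l` started at `q` (equal to `q` for the empty path). -/
def pathTarget (A : RDGraph) (q : A.V) (l : List A.E) : A.V :=
  l.foldl (fun _ e => A.t e) q

@[simp] lemma pathTarget_nil (A : RDGraph) (q : A.V) : A.pathTarget q [] = q := rfl

@[simp] lemma pathTarget_cons (A : RDGraph) (q : A.V) (a : A.E) (l : List A.E) :
    A.pathTarget q (a :: l) = A.pathTarget (A.t a) l := rfl

lemma pathTarget_append (A : RDGraph) (q : A.V) (l l' : List A.E) :
    A.pathTarget q (l ++ l') = A.pathTarget (A.pathTarget q l) l' := by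
  simp [pathTarget]

@[simp] lemma pathTarget_append_single (A : RDGraph) (q : A.V) (l : List A.E) (e : A.E) :
    A.pathTarget q (l ++ [e]) = A.t e := by
  rw [pathTarget_append]; rfl

lemma pathFrom_nil (A : RDGraph) (q : A.V) : A.PathFrom q [] :=
  ⟨List.isChain_nil, by simp⟩

lemma pathTarget_getLast {A : RDGraph} {q : A.V} {l : List A.E} {x : A.E}
    (hx : x ∈ l.getLast?) : A.pathTarget q l = A.t x := by
  induction l generalizing q with
  | nil => simp at hx
  | cons a l ih =>
    cases l with
    | nil => simp at hx; subst hx; rfl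
    | cons b l =>
      rw [List.getLast?_cons_cons] at hx
      simpa using ih (q := A.t a) hx

lemma pathFrom_append_single {A : RDGraph} {q : A.V} {l : List A.E} {e : A.E}
    (h : A.PathFrom q l) (he : A.s e = A.pathTarget q l) :
    A.PathFrom q (l ++ [e]) := by
  constructor
  · apply List.isChain_append.mpr
    refine ⟨h.1, List.isChain_singleton _, ?_⟩
    intro x hx y hy
    simp at hy
    subst hy
    rw [he]
    exact (pathTarget_getLast hx).symm
  · intro f hf
    cases l with
    | nil =>
      simp at hf
      subst hf
      simpa using he
    | cons a l =>
      simp at hf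
      subst hf
      exact h.2 a (by simp)

/-- `w` is reachable from `q` by an oriented path. -/
def Reach (A : RDGraph) (q w : A.V) : Prop :=
  ∃ l, A.PathFrom q l ∧ A.pathTarget q l = w

lemma reach_self (A : RDGraph) (q : A.V) : A.Reach q q :=
  ⟨[], A.pathFrom_nil q, rfl⟩

lemma reach_target {A : RDGraph} {q : A.V} {e : A.E} (h : A.Reach q (A.s e)) :
    A.Reach q (A.t e) := by
  obtain ⟨l, hl, ht⟩ := h
  exact ⟨l ++ [e], pathFrom_append_single hl ht.symm, by simp⟩

/-- A graph is connected (as a rooted directed graph) if every vertex is reachable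
from the root. -/
def Connected (A : RDGraph) : Prop := ∀ w : A.V, A.Reach A.root w

/-- A graph is a tree if the target map from paths emanating from the root to
vertices is a bijection. -/
def IsTree (A : RDGraph) : Prop :=
  Function.Bijective
    (fun l : {l : List A.E // A.PathFrom A.root l} => A.pathTarget A.root l.1)

/-- A graph is locally finite if every vertex has finitely many outgoing edges. -/
def LocallyFinite (A : RDGraph) : Prop := ∀ q : A.V, Finite {e : A.E // A.s e = q}

/-- Adjacency: there is an edge from `v` to `w`. -/
def Adj (A : RDGraph) (v w : A.V) : Prop := ∃ e, A.s e = v ∧ A.t e = w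

/-- The induced rooted subgraph on all vertices reachable from `q` (the "cone" at `q`). -/
def subgraph (A : RDGraph) (q : A.V) : RDGraph where
  V := {w // A.Reach q w}
  E := {e // A.Reach q (A.s e)}
  s := fun e => ⟨A.s e.1, e.2⟩
  t := fun e => ⟨A.t e.1, reach_target e.2⟩
  root := ⟨q, A.reach_self q⟩

/-- The truncation of the cone at `v` to vertices at distance at most `d` from `v`. -/
def trunc (A : RDGraph) (v : A.V) (d : ℕ) : RDGraph where
  V := {w // ∃ l, A.PathFrom v l ∧ A.pathTarget v l = w ∧ l.length ≤ d}
  E := {e // ∃ l, A.PathFrom v l ∧ A.pathTarget v l = A.s e ∧ l.length < d}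
  s := fun e => ⟨A.s e.1, e.2.imp fun _ h => ⟨h.1, h.2.1, h.2.2.le⟩⟩
  t := fun e => ⟨A.t e.1, by
    obtain ⟨l, h1, h2, h3⟩ := e.2
    exact ⟨l ++ [e.1], pathFrom_append_single h1 h2.symm, by simp,
      by simp only [List.length_append, List.length_singleton]; omega⟩⟩
  root := ⟨v, [], A.pathFrom_nil v, rfl, Nat.zero_le d⟩

/-- The universal covering tree of `A`: vertices are the paths emanating from the root. -/
def cover (A : RDGraph) : RDGraph where
  V := {l : List A.E // A.PathFrom A.root l}
  E := {x : {l : List A.E // A.PathFrom A.root l} × A.E //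
          A.s x.2 = A.pathTarget A.root x.1.1}
  s := fun x => x.1.1
  t := fun x => ⟨x.1.1.1 ++ [x.1.2], pathFrom_append_single x.1.1.2 x.2⟩
  root := ⟨[], A.pathFrom_nil _⟩

end RDGraph

/-- A morphism of rooted directed multigraphs. -/
structure GraphHom (A B : RDGraph) where
  v : A.V → B.V
  e : A.E → B.E
  root_eq : v A.root = B.root
  s_eq : ∀ x, B.s (e x) = v (A.s x)
  t_eq : ∀ x, B.t (e x) = v (A.t x)

namespace GraphHom

variable {A B : RDGraph}

/-- The unique path lifting property. -/
def UPLP (p : GraphHom A B) : Prop :=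
  ∀ (q : A.V) (l' : List B.E), B.PathFrom (p.v q) l' →
    ∃! l : List A.E, A.PathFrom q l ∧ l.map p.e = l'

/-- A covering morphism: surjective on vertices, with the unique path lifting property. -/
def IsCovering (p : GraphHom A B) : Prop := Function.Surjective p.v ∧ p.UPLP

/-- An isomorphism of graphs: bijective on vertices and on edges. -/
def IsIso (p : GraphHom A B) : Prop := Function.Bijective p.v ∧ Function.Bijective p.e

/-- The restriction of the edge map to the edges emanating from `q`. -/
def outMap (p : GraphHom A B) (q : A.V) :
    {e : A.E // A.s e = q} → {e' : B.E // B.s e' = p.v q} :=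
  fun e => ⟨p.e e.1, by rw [p.s_eq, e.2]⟩

lemma isPath_map (p : GraphHom A B) {l : List A.E} (h : A.IsPath l) :
    B.IsPath (l.map p.e) := by
  rw [RDGraph.IsPath]
  show List.IsChain _ (l.map p.e)
  rw [List.isChain_map]
  exact List.IsChain.imp (fun a b hab => by rw [p.t_eq, p.s_eq, hab]) h

lemma pathFrom_map (p : GraphHom A B) {q : A.V} {l : List A.E} (h : A.PathFrom q l) :
    B.PathFrom (p.v q) (l.map p.e) := by
  refine ⟨p.isPath_map h.1, ?_⟩
  intro f hf
  cases l with
  | nil => simp at hf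
  | cons a l =>
    simp at hf
    subst hf
    rw [p.s_eq, h.2 a (by simp)]

lemma pathTarget_map (p : GraphHom A B) (q : A.V) (l : List A.E) :
    B.pathTarget (p.v q) (l.map p.e) = p.v (A.pathTarget q l) := by
  induction l generalizing q with
  | nil => rfl
  | cons a l ih =>
    show B.pathTarget (B.t (p.e a)) (l.map p.e) = _
    rw [p.t_eq]
    exact ih (A.t a)

lemma reach_map (p : GraphHom A B) {q w : A.V} (h : A.Reach q w) :
    B.Reach (p.v q) (p.v w) := by
  obtain ⟨l, hl, ht⟩ := h
  exact ⟨l.map p.e, p.pathFrom_map hl, by rw [p.pathTarget_map, ht]⟩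

end GraphHom

/-- Two graphs are isomorphic. -/
def RDGraph.Iso (A B : RDGraph) : Prop := ∃ p : GraphHom A B, p.IsIso

/-- The universal covering morphism from the universal covering tree of `A` to `A`. -/
def RDGraph.uCover (A : RDGraph) : GraphHom A.cover A where
  v := fun l => A.pathTarget A.root l.1
  e := fun x => x.1.2
  root_eq := rfl
  s_eq := fun x => x.2
  t_eq := fun x => by
    show A.t x.1.2 = A.pathTarget A.root (x.1.1.1 ++ [x.1.2])
    simp

/-- The morphism induced between universal covering trees by a morphism of graphs. -/
def GraphHom.coverMap {A B : RDGraph} (p : GraphHom A B) : GraphHom A.cover B.cover where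
  v := fun l => ⟨l.1.map p.e, by have := p.pathFrom_map l.2; rwa [p.root_eq] at this⟩
  e := fun x =>
    ⟨(⟨x.1.1.1.map p.e, by have := p.pathFrom_map x.1.1.2; rwa [p.root_eq] at this⟩,
      p.e x.1.2), by
        show B.s (p.e x.1.2) = B.pathTarget B.root (x.1.1.1.map p.e)
        rw [p.s_eq, x.2, ← p.root_eq, p.pathTarget_map]⟩
  root_eq := Subtype.ext rfl
  s_eq := fun _ => rfl
  t_eq := fun x => by
    apply Subtype.ext
    simp [RDGraph.cover]

/-- `A` is a covering quotient of `T`. -/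
def IsCovQuotient (T A : RDGraph) : Prop := ∃ p : GraphHom T A, p.IsCovering

/-- `A` is a minimal covering quotient of `T`: a covering quotient with the minimal
number of vertices among all covering quotients of `T`. -/
def IsMinCovQuotient (T A : RDGraph) : Prop :=
  IsCovQuotient T A ∧
    ∀ B : RDGraph, IsCovQuotient T B → Cardinal.mk A.V ≤ Cardinal.mk B.V

/-- `T` has finitely many cone types. -/
def FinManyCones (T : RDGraph) : Prop :=
  ∃ S : Set T.V, S.Finite ∧ ∀ v : T.V, ∃ w ∈ S, RDGraph.Iso (T.subgraph v) (T.subgraph w)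

/-- A self-similar tree: a locally finite tree with finitely many cone types. -/
def SelfSimilarTree (T : RDGraph) : Prop := T.IsTree ∧ T.LocallyFinite ∧ FinManyCones T

namespace RDGraph

/-- The automorphism group of a graph, realized as the group of root-preserving,
adjacency-preserving permutations of the vertex set (for trees this is the same as the
automorphism group in the sense of graph morphisms, since in a tree an edge is determined
by its endpoints). -/
def autGroup (T : RDGraph) : Subgroup (Equiv.Perm T.V) where
  carrier := {g | g T.root = T.root ∧ ∀ v w, T.Adj v w ↔ T.Adj (g v) (g w)}
  one_mem' := ⟨rfl, fun _ _ => Iff.rfl⟩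
  mul_mem' := by
    rintro a b ⟨ha1, ha2⟩ ⟨hb1, hb2⟩
    refine ⟨?_, fun v w => ?_⟩
    · show a (b T.root) = T.root
      rw [hb1, ha1]
    · exact (hb2 v w).trans (ha2 (b v) (b w))
  inv_mem' := by
    rintro a ⟨ha1, ha2⟩
    refine ⟨?_, fun v w => ?_⟩
    · show a.symm T.root = T.root
      rw [Equiv.symm_apply_eq]
      exact ha1.symm
    · have h := ha2 (a⁻¹ v) (a⁻¹ w)
      simpa using h.symm

/-- The subgroup of permutations of the vertices fixing every vertex outside
of the cone at `v`. -/
def fixOutside (T : RDGraph) (v : T.V) : Subgroup (Equiv.Perm T.V) where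
  carrier := {g | ∀ w, ¬ T.Reach v w → g w = w}
  one_mem' := fun _ _ => rfl
  mul_mem' := by
    intro a b ha hb w hw
    show a (b w) = w
    rw [hb w hw, ha w hw]
  inv_mem' := by
    intro a ha w hw
    show a.symm w = w
    rw [Equiv.symm_apply_eq]
    exact (ha w hw).symm

/-- The rigid stabilizer of the vertex `v`: automorphisms fixing every vertex
outside the subtree spanned by `v` and its descendants. -/
def rist (T : RDGraph) (v : T.V) : Subgroup (Equiv.Perm T.V) :=
  T.autGroup ⊓ T.fixOutside v

/-- The set of vertices at distance `n` from the root. -/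
def level (T : RDGraph) (n : ℕ) : Set T.V :=
  {v | ∃ l : List T.E, T.PathFrom T.root l ∧ T.pathTarget T.root l = v ∧ l.length = n}

/-- The `n`-th rigid level stabilizer: the subgroup generated by the rigid stabilizers
of the vertices at distance `n` from the root. -/
def ristLevel (T : RDGraph) (n : ℕ) : Subgroup (Equiv.Perm T.V) :=
  ⨆ v ∈ T.level n, T.rist v

/-- The `n`-th rigid level stabilizer, as a subgroup of the automorphism group. -/
def ristIn (T : RDGraph) (n : ℕ) : Subgroup ↥T.autGroup :=
  (T.ristLevel n).comap T.autGroup.subtype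

end RDGraph

/-- A recurrent double edge: a pair of distinct parallel edges such that there is an
oriented loop which contains one of them, or from which their common source can be
reached. -/
def HasRecDoubleEdge (A : RDGraph) : Prop :=
  ∃ e₁ e₂ : A.E, e₁ ≠ e₂ ∧ A.s e₁ = A.s e₂ ∧ A.t e₁ = A.t e₂ ∧
    ((∃ (q : A.V) (l : List A.E),
        A.PathFrom q l ∧ l ≠ [] ∧ A.pathTarget q l = q ∧ (e₁ ∈ l ∨ e₂ ∈ l)) ∨
     (∃ (q : A.V) (l : List A.E),
        A.PathFrom q l ∧ l ≠ [] ∧ A.pathTarget q l = q ∧ A.Reach q (A.s e₁)))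

/-- A deterministic finite automaton over the alphabet `A`, with a partial transition
function, a single initial state, and all states accepting. -/
structure PDFA (A : Type) where
  Q : Type
  finQ : Finite Q
  neQ : Nonempty Q
  δ : Q → A → Option Q
  init : Q

namespace PDFA

variable {A : Type} (M : PDFA A)

/-- Running the automaton from state `q` on a word; `none` if it gets stuck. -/
def run : M.Q → List A → Option M.Q
  | q, [] => some q
  | q, a :: w => (M.δ q a).bind fun q' => run q' w

/-- The regular language accepted by `M`. -/
def Lang : Set (List A) := {w | (M.run M.init w).isSome}

lemma run_append (q : M.Q) (u w : List A) :
    M.run q (u ++ w) = (M.run q u).bind fun q' => M.run q' w := by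
  induction u generalizing q with
  | nil => simp [run]
  | cons a u ih =>
    simp only [List.cons_append, run]
    cases M.δ q a with
    | none => simp
    | some q' => simp [ih]

lemma isSome_of_append {q : M.Q} {u w : List A}
    (h : (M.run q (u ++ w)).isSome) : (M.run q u).isSome := by
  rw [run_append] at h
  cases hu : M.run q u with
  | none => rw [hu] at h; simp at h
  | some q' => simp

/-- The path language tree of `M`: the tree whose vertices are the words of the
language of `M`, with an edge from `w` to `w ++ [a]` whenever both belong to the
language. -/
def pathTree : RDGraph where
  V := {w : List A // (M.run M.init w).isSome}
  E := {x : List A × A // (M.run M.init (x.1 ++ [x.2])).isSome}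
  s := fun x => ⟨x.1.1, M.isSome_of_append x.2⟩
  t := fun x => ⟨x.1.1 ++ [x.1.2], x.2⟩
  root := ⟨[], by simp [run]⟩

/-- The underlying rooted directed multigraph of the automaton `M`. -/
def underlying : RDGraph where
  V := M.Q
  E := {x : M.Q × A // (M.δ x.1 x.2).isSome}
  s := fun x => x.1.1
  t := fun x => (M.δ x.1.1 x.1.2).get x.2
  root := M.init

/-- `M` is geometrically minimal: it has the minimal number of states among all DFAs
(over arbitrary finite nonempty alphabets) whose path language trees are isomorphic,
as unlabelled rooted trees, to the path language tree of `M`. -/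
def GeomMinimal : Prop :=
  ∀ (B : Type), Finite B → Nonempty B → ∀ N : PDFA B,
    RDGraph.Iso M.pathTree N.pathTree → Nat.card M.Q ≤ Nat.card N.Q

/-- The state reached after reading the word `w` of the language. -/
def qstate (w : List A) (h : (M.run M.init w).isSome) : M.Q :=
  (M.run M.init w).get h

/-- The group of admissible permutations at the state `q`: permutations `τ` of the
alphabet fixing the letters outside `Σ(q)` and satisfying `δ(q, τ a) = δ(q, a)`. -/
def SymQ (q : M.Q) : Subgroup (Equiv.Perm A) where
  carrier := {τ | ∀ a, M.δ q (τ a) = M.δ q a ∧ (M.δ q a = none → τ a = a)}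
  one_mem' := fun _ => ⟨rfl, fun _ => rfl⟩
  mul_mem' := by
    intro τ₁ τ₂ h1 h2 a
    constructor
    · show M.δ q (τ₁ (τ₂ a)) = M.δ q a
      rw [(h1 (τ₂ a)).1, (h2 a).1]
    · intro hn
      show τ₁ (τ₂ a) = a
      rw [(h2 a).2 hn, (h1 a).2 hn]
  inv_mem' := by
    intro τ h a
    have h1 := (h (τ.symm a)).1
    rw [Equiv.apply_symm_apply] at h1
    constructor
    · show M.δ q (τ.symm a) = M.δ q a
      exact h1.symm
    · intro hn
      have h2 := (h (τ.symm a)).2 (h1.symm.trans hn)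
      rw [Equiv.apply_symm_apply] at h2
      show τ.symm a = a
      exact h2.symm

end PDFA

/-- Extending a portrait to a map on words (the first argument is the accumulated
prefix): the `i`-th letter of the image word is the image of the `i`-th letter under
the local injection at the prefix of length `i - 1`. -/
def portraitExtend {A : Type} (σ : List A → A → A) : List A → List A → List A
  | _, [] => []
  | pre, a :: w => σ pre a :: portraitExtend σ (pre ++ [a]) w

/-!
An automorphism `g` of a graph `A` generates a cyclic group acting on `A`. Collapsing each
vertex orbit to a point, and keeping only the edges out of a chosen representative of each
orbit, gives a graph `A/⟨g⟩` onto which `A` projects by a covering morphism: an edge out of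
`a` is sent to its translate out of the representative of `a`. Composing with a covering
`T_A → A` shows that `A/⟨g⟩` is again a covering quotient of `T_A`, and if `g` moves a
vertex of the finite graph `A` then `A/⟨g⟩` has fewer vertices, contradicting minimality.
-/

open Equiv Equiv.Perm Cardinal

lemma Cardinal.mk_quotient_lt {α : Type*} [Finite α] (s : Setoid α) {x y : α}
    (hxy : s x y) (hne : x ≠ y) : #(Quotient s) < #α := by
  have := Fintype.ofFinite α
  have := Fintype.ofFinite (Quotient s)
  rw [mk_fintype, mk_fintype, Nat.cast_lt]
  exact Fintype.card_lt_of_surjective_not_injective _ Quotient.mk_surjective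
    fun hinj => hne (hinj (Quotient.sound hxy))

lemma Function.Semiconj.zpow_perm {α β : Type*} {f : α → β} {τ : Perm α} {σ : Perm β}
    (h : Function.Semiconj f τ σ) (k : ℤ) : Function.Semiconj f ⇑(τ ^ k) ⇑(σ ^ k) := by
  have h_inv (a : α) : f (τ⁻¹ a) = σ⁻¹ (f a) := by
    rw [eq_inv_iff_eq, ← h]; simp
  intro a
  induction k using Int.induction_on generalizing a with
  | zero => rfl
  | succ k ih => rw [zpow_add_one, zpow_add_one, mul_apply, mul_apply, ih, h]
  | pred k ih => rw [zpow_sub_one, zpow_sub_one, mul_apply, mul_apply, ih, h_inv]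

namespace RDGraph

lemma pathFrom_cons_iff {A : RDGraph} {q : A.V} {a : A.E} {l : List A.E} :
    A.PathFrom q (a :: l) ↔ A.s a = q ∧ A.PathFrom (A.t a) l := by
  change List.IsChain _ (a :: l) ∧ _ ↔ A.s a = q ∧ List.IsChain _ l ∧ _
  simp only [List.isChain_cons, List.head?_cons, Option.mem_def, Option.some.injEq,
    forall_eq', @eq_comm _ (A.t a)]
  tauto

end RDGraph

namespace GraphHom

def comp {A B C : RDGraph} (q : GraphHom B C) (p : GraphHom A B) : GraphHom A C where
  v := q.v ∘ p.v
  e := q.e ∘ p.e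
  root_eq := (congrArg q.v p.root_eq).trans q.root_eq
  s_eq x := (q.s_eq _).trans (congrArg q.v (p.s_eq x))
  t_eq x := (q.t_eq _).trans (congrArg q.v (p.t_eq x))

lemma IsCovering.comp {A B C : RDGraph} {q : GraphHom B C} {p : GraphHom A B}
    (hq : q.IsCovering) (hp : p.IsCovering) : (q.comp p).IsCovering := by
  refine ⟨hq.1.comp hp.1, fun a l' hl' => ?_⟩
  obtain ⟨m, ⟨hm, hmq⟩, hm_uniq⟩ := hq.2 (p.v a) l' hl'
  obtain ⟨l, ⟨hl, hlp⟩, hl_uniq⟩ := hp.2 a m hm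
  refine ⟨l, ⟨hl, ?_⟩, fun l₂ ⟨hl₂, hl₂q⟩ => ?_⟩
  · rw [GraphHom.comp, ← List.map_map, hlp, hmq]
  · refine hl_uniq _ ⟨hl₂, hm_uniq _ ⟨p.pathFrom_map hl₂, ?_⟩⟩
    rwa [List.map_map]

lemma uplp_of_existsUnique_edge_lift {A B : RDGraph} (p : GraphHom A B)
    (h : ∀ (a : A.V) (e' : B.E), B.s e' = p.v a → ∃! e : A.E, A.s e = a ∧ p.e e = e') :
    p.UPLP := by
  intro a l' hl'
  induction l' generalizing a with
  | nil => exact ⟨[], ⟨A.pathFrom_nil a, rfl⟩, fun l ⟨_, hl⟩ => List.map_eq_nil_iff.1 hl⟩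
  | cons e' l' ih =>
    obtain ⟨he', hl'⟩ := RDGraph.pathFrom_cons_iff.1 hl'
    obtain ⟨e, ⟨hea, hee'⟩, he_uniq⟩ := h a e' he'
    rw [← hee', p.t_eq] at hl'
    obtain ⟨l, ⟨hl, hll'⟩, hl_uniq⟩ := ih (A.t e) hl'
    refine ⟨e :: l, ⟨RDGraph.pathFrom_cons_iff.2 ⟨hea, hl⟩, by simp [hee', hll']⟩, ?_⟩
    rintro (_ | ⟨e₂, l₂⟩) ⟨hl₂, hl₂e⟩
    · simp at hl₂e
    · obtain ⟨he₂a, hl₂⟩ := RDGraph.pathFrom_cons_iff.1 hl₂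
      obtain ⟨he₂e', hl₂l'⟩ := List.cons_eq_cons.1 hl₂e
      obtain rfl := he_uniq e₂ ⟨he₂a, he₂e'⟩
      rw [hl_uniq l₂ ⟨hl₂, hl₂l'⟩]

end GraphHom

namespace RDGraph

section OrbitGraph

variable {A : RDGraph} (σ : Perm A.V)

lemma exists_zpow_apply_eq_out (w : A.V) :
    ∃ k : ℤ, (σ ^ k) w = (Quotient.mk (SameCycle.setoid σ) w).out :=
  (Quotient.mk_out (s := SameCycle.setoid σ) w).symm

noncomputable def orbitExp (w : A.V) : ℤ := (exists_zpow_apply_eq_out σ w).choose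

lemma zpow_orbitExp_apply (w : A.V) :
    (σ ^ orbitExp σ w) w = (Quotient.mk (SameCycle.setoid σ) w).out :=
  (exists_zpow_apply_eq_out σ w).choose_spec

noncomputable def orbitGraph : RDGraph where
  V := Quotient (SameCycle.setoid σ)
  E := {e : A.E // (Quotient.mk (SameCycle.setoid σ) (A.s e)).out = A.s e}
  s e := Quotient.mk _ (A.s e.1)
  t e := Quotient.mk _ (A.t e.1)
  root := Quotient.mk _ A.root

variable {σ} {τ : Perm A.E} (hs : Function.Semiconj A.s τ σ) (ht : Function.Semiconj A.t τ σ)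
include hs ht

noncomputable def orbitProj : GraphHom A (A.orbitGraph σ) where
  v := Quotient.mk _
  e x := ⟨(τ ^ orbitExp σ (A.s x)) x, by
    rw [hs.zpow_perm _ _, zpow_orbitExp_apply, Quotient.out_eq]⟩
  root_eq := rfl
  s_eq x := Quotient.sound <| by
    show SameCycle σ (A.s ((τ ^ orbitExp σ (A.s x)) x)) (A.s x)
    rw [hs.zpow_perm _ _]
    exact sameCycle_zpow_left.2 (SameCycle.refl σ _)
  t_eq x := Quotient.sound <| by
    show SameCycle σ (A.t ((τ ^ orbitExp σ (A.s x)) x)) (A.t x)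
    rw [ht.zpow_perm _ _]
    exact sameCycle_zpow_left.2 (SameCycle.refl σ _)

lemma orbitProj_isCovering : (orbitProj hs ht).IsCovering := by
  refine ⟨Quotient.mk_surjective, (orbitProj hs ht).uplp_of_existsUnique_edge_lift ?_⟩
  intro a e' he'
  have hsrc : A.s e'.1 = (σ ^ orbitExp σ a) a := by
    rw [zpow_orbitExp_apply, ← e'.2]
    exact congrArg Quotient.out he'
  have hlift : A.s ((τ ^ orbitExp σ a)⁻¹ e'.1) = a := by
    rw [← zpow_neg, hs.zpow_perm _ _, hsrc, ← mul_apply, ← zpow_add, neg_add_cancel,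
      zpow_zero, one_apply]
  refine ⟨(τ ^ orbitExp σ a)⁻¹ e'.1, ⟨hlift, Subtype.ext ?_⟩, ?_⟩
  · show (τ ^ orbitExp σ (A.s _)) _ = e'.1
    rw [hlift, ← mul_apply, mul_inv_cancel, one_apply]
  · rintro e ⟨rfl, he⟩
    exact eq_inv_iff_eq.2 (congrArg Subtype.val he)

end OrbitGraph

end RDGraph

theorem stmt11_general (Abar : RDGraph) (hfinV : Finite Abar.V)
    (hmin : IsMinCovQuotient Abar.cover Abar) :
    ∀ g : GraphHom Abar Abar, g.IsIso → g.v = id := by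
  intro g hg
  by_contra hne
  obtain ⟨v, hv⟩ : ∃ v, g.v v ≠ v := by simpa [funext_iff] using hne
  set σ := Equiv.ofBijective g.v hg.1
  set τ := Equiv.ofBijective g.e hg.2
  obtain ⟨p, hp⟩ := hmin.1
  have hquot : IsCovQuotient Abar.cover (Abar.orbitGraph σ) :=
    ⟨_, (RDGraph.orbitProj_isCovering (σ := σ) (τ := τ) g.s_eq g.t_eq).comp hp⟩
  have hfewer : #(Abar.orbitGraph σ).V < #Abar.V :=
    Cardinal.mk_quotient_lt _ (sameCycle_apply_right.2 (SameCycle.refl σ v)) hv.symm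
  exact (hmin.2 _ hquot).not_gt hfewer

/-- Let `Ā` be a minimal graph, i.e. a finite connected graph which
is a minimal covering quotient of its own universal covering tree. Then every
automorphism of `Ā` is an edge automorphism: it is the identity on vertices. -/
theorem stmt11 (Abar : RDGraph) (hfinV : Finite Abar.V) (hfinE : Finite Abar.E)
    (hconn : Abar.Connected) (hmin : IsMinCovQuotient Abar.cover Abar) :
    ∀ g : GraphHom Abar Abar, g.IsIso → g.v = id :=
  stmt11_general Abar hfinV hmin
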